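/- The partial reserve and the transition matrix are jointly recovered from a single product integral: ∏_t^T (I + [[M(u)−r(u)I, R(u)],[0, M(u)]] du) = [[∏_t^T (I+(M(u)−r(u)I)du), V(t)],[0, P(t,T)]], where V(t) = ∫_t^T ∏_t^u (I+(M(s)−r(s)I)ds) R(u) ∏_u^T (I+M(s)ds) du. -/

import Mathlib

/-!
Both sides, as functions of `T`, solve the linear equation `X' = X 𝔸` with `X t = 1`, where `𝔸`
is the block generator, so they agree by uniqueness for Lipschitz ODEs. That the block matrix
on the right solves it reduces, in the upper right corner, to the variation-of-constants
formula `d/dT ∫_t^T f u * P u T du = f T + (∫_t^T f u * P u T du) * M T`, which follows by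
pulling `P y T` out of the integrand with the cocycle identity `P u T = P u y * P y T`.
-/

open Matrix MeasureTheory Set

attribute [local instance] Matrix.linftyOpNormedAddCommGroup Matrix.linftyOpNormedSpace
  Matrix.linftyOpNormedRing Matrix.linftyOpNormedAlgebra

section ProductIntegral

variable {𝔄 : Type*} [NormedRing 𝔄] [NormedAlgebra ℝ 𝔄]

theorem eq_of_hasDerivAt_mul_right {A f g : ℝ → 𝔄} (hA : Continuous A)
    (hf : ∀ t, HasDerivAt f (f t * A t) t) (hg : ∀ t, HasDerivAt g (g t * A t) t) {t₀ : ℝ}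
    (h₀ : f t₀ = g t₀) : f = g := by
  funext t
  obtain ⟨a, b, ht₀, ht⟩ : ∃ a b, t₀ ∈ Ioo a b ∧ t ∈ Ioo a b :=
    ⟨min t₀ t - 1, max t₀ t + 1, by grind, by grind⟩
  obtain ⟨C, hC⟩ := isCompact_Icc.exists_bound_of_continuousOn (hA.continuousOn (s := Icc a b))
  have hLip (u : ℝ) (hu : u ∈ Ioo a b) :
      LipschitzOnWith C.toNNReal (fun X => X * A u) univ := by
    refine (LipschitzWith.of_dist_le_mul fun X Y => ?_).lipschitzOnWith
    rw [dist_eq_norm, dist_eq_norm, ← sub_mul, mul_comm (C.toNNReal : ℝ)]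
    refine (norm_mul_le _ _).trans (mul_le_mul_of_nonneg_left ?_ (norm_nonneg _))
    exact (hC u (Ioo_subset_Icc_self hu)).trans C.le_coe_toNNReal
  exact ODE_solution_unique_of_mem_Ioo hLip ht₀ (fun u _ => ⟨hf u, mem_univ _⟩)
    (fun u _ => ⟨hg u, mem_univ _⟩) h₀ ht

structure IsProductIntegral (A : ℝ → 𝔄) (P : ℝ → ℝ → 𝔄) : Prop where
  hasDerivAt : ∀ s t, HasDerivAt (fun u => P s u) (P s t * A t) t
  self : ∀ s, P s s = 1

namespace IsProductIntegral

variable {A : ℝ → 𝔄} {P : ℝ → ℝ → 𝔄}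

theorem unique {Q : ℝ → ℝ → 𝔄} (hA : Continuous A) (hP : IsProductIntegral A P)
    (hQ : IsProductIntegral A Q) : P = Q :=
  funext fun s => eq_of_hasDerivAt_mul_right hA (hP.hasDerivAt s) (hQ.hasDerivAt s)
    ((hP.self s).trans (hQ.self s).symm)

theorem mul_eq (hA : Continuous A) (hP : IsProductIntegral A P) (s u t : ℝ) :
    P s u * P u t = P s t := by
  refine congrFun (eq_of_hasDerivAt_mul_right hA (f := fun t => P s u * P u t)
    (fun t => ?_) (hP.hasDerivAt s) (t₀ := u) (by rw [hP.self, mul_one])) t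
  simpa only [mul_assoc] using (hP.hasDerivAt u t).const_mul (P s u)

theorem continuous_right (hP : IsProductIntegral A P) (s : ℝ) : Continuous (P s) :=
  continuous_iff_continuousAt.2 fun t => (hP.hasDerivAt s t).continuousAt

theorem continuous_left [CompleteSpace 𝔄] (hA : Continuous A) (hP : IsProductIntegral A P)
    (t : ℝ) : Continuous fun s => P s t := by
  let U (s : ℝ) : 𝔄ˣ :=
    ⟨P t s, P s t, by rw [hP.mul_eq hA, hP.self], by rw [hP.mul_eq hA, hP.self]⟩
  have hU : (fun s => P s t) = fun s => Ring.inverse (P t s) :=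
    funext fun s => (Ring.inverse_unit (U s)).symm
  rw [hU, continuous_iff_continuousAt]
  exact fun s => ContinuousAt.comp (g := Ring.inverse) (NormedRing.inverse_continuousAt (U s))
    (hP.continuous_right t).continuousAt

theorem hasDerivAt_integral_mul [CompleteSpace 𝔄] (hA : Continuous A)
    (hP : IsProductIntegral A P) {f : ℝ → 𝔄} (hf : Continuous f) (s t : ℝ) :
    HasDerivAt (fun T => ∫ u in s..T, f u * P u T)
      (f t + (∫ u in s..t, f u * P u t) * A t) t := by
  have hfP : Continuous fun u => f u * P u t := hf.mul (hP.continuous_left hA t)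
  have hsplit : (fun T => ∫ u in s..T, f u * P u T) =
      fun T => (∫ u in s..T, f u * P u t) * P t T := by
    funext T
    have hfactor (u : ℝ) : f u * P u T = f u * P u t * P t T := by rw [mul_assoc, hP.mul_eq hA]
    simp only [hfactor]
    exact ((ContinuousLinearMap.mul ℝ 𝔄).flip (P t T)).intervalIntegral_comp_comm
      (hfP.intervalIntegrable s T)
  rw [hsplit]
  convert (hfP.integral_hasStrictDerivAt s t).hasDerivAt.fun_mul (hP.hasDerivAt t t) using 1
  simp only [hP.self, mul_one, one_mul]

end IsProductIntegral

end ProductIntegral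

section Blocks

variable {l m n o : Type*} [Fintype l] [Fintype m] [Fintype n] [Fintype o]

theorem HasDerivAt.matrix_fromBlocks {A : ℝ → Matrix n l ℝ} {B : ℝ → Matrix n m ℝ}
    {C : ℝ → Matrix o l ℝ} {D : ℝ → Matrix o m ℝ} {A' B' C' D'} {x : ℝ}
    (hA : HasDerivAt A A' x) (hB : HasDerivAt B B' x) (hC : HasDerivAt C C' x)
    (hD : HasDerivAt D D' x) :
    HasDerivAt (fun u => fromBlocks (A u) (B u) (C u) (D u)) (fromBlocks A' B' C' D') x := by
  let L : (Matrix n l ℝ × Matrix n m ℝ) × (Matrix o l ℝ × Matrix o m ℝ) →ₗ[ℝ]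
      Matrix (n ⊕ o) (l ⊕ m) ℝ :=
    { toFun := fun X => fromBlocks X.1.1 X.1.2 X.2.1 X.2.2
      map_add' := fun X Y => (fromBlocks_add ..).symm
      map_smul' := fun c X => (fromBlocks_smul ..).symm }
  exact L.toContinuousLinearMap.hasFDerivAt.comp_hasDerivAt x
    ((hA.prodMk hB).prodMk (hC.prodMk hD))

theorem IsProductIntegral.fromBlocks [DecidableEq n] {A B D : ℝ → Matrix n n ℝ}
    {F P : ℝ → ℝ → Matrix n n ℝ} (hF : IsProductIntegral A F) (hP : IsProductIntegral D P)
    (hB : Continuous B) (hD : Continuous D) :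
    IsProductIntegral (fun u => fromBlocks (A u) (B u) 0 (D u))
      (fun s t => fromBlocks (F s t) (∫ u in s..t, F s u * B u * P u t) 0 (P s t)) where
  hasDerivAt s t := by
    refine ((hF.hasDerivAt s t).matrix_fromBlocks
      (hP.hasDerivAt_integral_mul hD ((hF.continuous_right s).mul hB) s t)
      (hasDerivAt_const t 0) (hP.hasDerivAt s t)).congr_deriv ?_
    simp [fromBlocks_multiply]
  self s := by simp [hF.self, hP.self]

end Blocks

/-- The partial reserve and the transition matrix are jointly recovered
from a single product integral: the product integral from `t` to `T` of the block matrix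
`[[M u - r u • 1, R u], [0, M u]]` equals
`[[∏_t^T (I + (M - r•I) du), V t], [0, P (t,T)]]` where
`V t = ∫_t^T ∏_t^u (I + (M - r•I) ds) * R u * ∏_u^T (I + M ds) du`. -/
theorem partial_reserve_via_block_productIntegral {p : ℕ} (T : ℝ)
    (M R : ℝ → Matrix (Fin p) (Fin p) ℝ) (r : ℝ → ℝ)
    (hM : Continuous M) (hR : Continuous R) (hr : Continuous r)
    (P F : ℝ → ℝ → Matrix (Fin p) (Fin p) ℝ)
    (hP : ∀ s t : ℝ, HasDerivAt (fun u => P s u) (P s t * M t) t)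
    (hP0 : ∀ s : ℝ, P s s = 1)
    (hF : ∀ s t : ℝ, HasDerivAt (fun u => F s u) (F s t * (M t - r t • 1)) t)
    (hF0 : ∀ s : ℝ, F s s = 1)
    (G : ℝ → ℝ → Matrix (Fin p ⊕ Fin p) (Fin p ⊕ Fin p) ℝ)
    (hG : ∀ s t : ℝ,
      HasDerivAt (fun u => G s u)
        (G s t * Matrix.fromBlocks (M t - r t • 1) (R t) 0 (M t)) t)
    (hG0 : ∀ s : ℝ, G s s = 1) :
    ∀ t : ℝ,
      G t T = Matrix.fromBlocks (F t T)
        (∫ u in t..T, F t u * R u * P u T) 0 (P t T) := by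
  have hA : Continuous fun u => fromBlocks (M u - r u • 1) (R u) 0 (M u) :=
    (hM.sub (hr.smul continuous_const)).matrix_fromBlocks hR continuous_const hM
  intro t
  rw [IsProductIntegral.unique hA ⟨hG, hG0⟩ (.fromBlocks ⟨hF, hF0⟩ ⟨hP, hP0⟩ hR hM)]
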